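/- arXiv:2603.13624 — 4 statements merged into one kernel-verified Lean document; each statement's English description precedes it below -/
import Mathlib

section
/- Let V be a finite set and g : 2^V → ℝ≥0 ∪ {∞} a monotone set function with g(∅) = 0. Define f(X,Y) = g(X) + g(Y) − g(X ∩ Y), let c be the minimum of f(X,Y) over all pairs X, Y ⊆ V with g(X ∪ Y) > f(X,Y) (c = ∞ if no such pair exists), and define h(X) = min(g(X), c). Then h is a polymatroid: h(∅) = 0, h is monotone, and h is submodular, i.e., h(X ∪ Y) + h(X ∩ Y) ≤ h(X) + h(Y) for all X, Y ⊆ V. -/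
open scoped ENNReal

private lemma key_min (a b i c m : ℝ≥0∞) (hia : i ≤ a) (hib : i ≤ b)
    (hmc : m ≤ c) (hm : m + i ≤ a + b) :
    m + min i c ≤ min a c + min b c := by
  rcases le_total a c with hac | hca
  · rcases le_total b c with hbc | hcb
    · rw [min_eq_left hac, min_eq_left hbc, min_eq_left (hia.trans hac)]
      exact hm
    · rw [min_eq_left hac, min_eq_right hcb, min_eq_left (hia.trans hac)]
      calc m + i ≤ c + a := add_le_add hmc hia
        _ = a + c := add_comm _ _
  · rcases le_total b c with hbc | hcb
    · rw [min_eq_right hca, min_eq_left hbc, min_eq_left (hib.trans hbc)]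
      exact add_le_add hmc hib
    · rw [min_eq_right hca, min_eq_right hcb]
      exact add_le_add hmc (min_le_right _ _)

/-- **Truncation lemma, claim 1 (polymatroid property).**
Given a monotone set function `g : 2^V → ℝ≥0∪{∞}` with `g ∅ = 0`, defining
`f X Y = g X + g Y - g (X ∩ Y)`, `c` as the minimum of `f X Y` over all pairs with
`g (X ∪ Y) > f X Y` (`∞` if there is no such pair), and `h X = min (g X) c`,
the function `h` is a polymatroid: it vanishes on `∅`, is monotone, and is submodular. -/
theorem truncation_polymatroid {V : Type*} [Fintype V] [DecidableEq V]
    (g : Finset V → ℝ≥0∞)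
    (hmono : ∀ X Y : Finset V, X ⊆ Y → g X ≤ g Y)
    (hg0 : g ∅ = 0)
    (f : Finset V → Finset V → ℝ≥0∞)
    (hf : ∀ X Y : Finset V, f X Y = g X + g Y - g (X ∩ Y))
    (c : ℝ≥0∞)
    (hc : c = ⨅ p : {p : Finset V × Finset V // f p.1 p.2 < g (p.1 ∪ p.2)}, f p.1.1 p.1.2)
    (h : Finset V → ℝ≥0∞)
    (hh : ∀ X : Finset V, h X = min (g X) c) :
    h ∅ = 0 ∧ (∀ X Y : Finset V, X ⊆ Y → h X ≤ h Y) ∧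
      (∀ X Y : Finset V, h (X ∪ Y) + h (X ∩ Y) ≤ h X + h Y) := by
  refine ⟨?_, ?_, ?_⟩
  · rw [hh, hg0]; simp
  · intro X Y hXY
    rw [hh, hh]
    exact min_le_min (hmono X Y hXY) le_rfl
  · intro X Y
    simp only [hh]
    have hia : g (X ∩ Y) ≤ g X := hmono _ _ Finset.inter_subset_left
    have hib : g (X ∩ Y) ≤ g Y := hmono _ _ Finset.inter_subset_right
    have hmf : min (g (X ∪ Y)) c ≤ g X + g Y - g (X ∩ Y) := by
      rcases lt_or_ge (f X Y) (g (X ∪ Y)) with hlt | hle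
      · refine (min_le_right _ _).trans ?_
        rw [hc]
        have := iInf_le
          (fun p : {p : Finset V × Finset V // f p.1 p.2 < g (p.1 ∪ p.2)} =>
            f p.1.1 p.1.2) ⟨(X, Y), hlt⟩
        simpa [hf] using this
      · refine (min_le_left _ _).trans ?_
        rw [← hf]; exact hle
    have hm : min (g (X ∪ Y)) c + g (X ∩ Y) ≤ g X + g Y := by
      calc min (g (X ∪ Y)) c + g (X ∩ Y)
          ≤ (g X + g Y - g (X ∩ Y)) + g (X ∩ Y) := add_le_add_left hmf _
        _ = g X + g Y := tsub_add_cancel_of_le (hia.trans le_self_add)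
    exact key_min _ _ _ _ _ hia hib (min_le_right _ _) hm
end

section
/- Let V be a finite set, g : 2^V → ℝ≥0 ∪ {∞} monotone with g(∅) = 0, and let h(X) = min(g(X), c) where c is the truncation constant (minimum of f(X,Y) = g(X) + g(Y) − g(X∩Y) over pairs violating submodularity of g). Suppose (Δ, n) is a collection of statistics (a set Δ of conditional terms Y|X with X, Y ⊆ V, and n : Δ → ℝ≥0) such that g satisfies (Δ, n), meaning g(X ∪ Y) − g(X) ≤ n(Y|X) for every (Y|X) ∈ Δ. Then h also satisfies (Δ, n), i.e., h(X ∪ Y) − h(X) ≤ n(Y|X) for every (Y|X) ∈ Δ. -/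
open scoped ENNReal

/-- **Truncation preserves statistics.**
A pair `p = (X, Y)` in `Δ` stands for the conditional term `Y|X`, with bound `n p`.
If the monotone function `g` (with `g ∅ = 0`) satisfies the statistics `(Δ, n)`,
meaning `g (X ∪ Y) - g X ≤ n (X, Y)` for every `(X, Y) ∈ Δ` (truncated subtraction on
`ℝ≥0∞` implements the conventions for `∞`), then so does its truncation
`h X = min (g X) c`, where `c` is the truncation constant of `g`. -/
theorem truncation_satisfies_statistics {V : Type*} [Fintype V] [DecidableEq V]
    (g : Finset V → ℝ≥0∞)
    (hmono : ∀ X Y : Finset V, X ⊆ Y → g X ≤ g Y)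
    (hg0 : g ∅ = 0)
    (f : Finset V → Finset V → ℝ≥0∞)
    (hf : ∀ X Y : Finset V, f X Y = g X + g Y - g (X ∩ Y))
    (c : ℝ≥0∞)
    (hc : c = ⨅ p : {p : Finset V × Finset V // f p.1 p.2 < g (p.1 ∪ p.2)}, f p.1.1 p.1.2)
    (h : Finset V → ℝ≥0∞)
    (hh : ∀ X : Finset V, h X = min (g X) c)
    (Δ : Set (Finset V × Finset V))
    (n : Finset V × Finset V → ℝ≥0∞)
    (hgΔ : ∀ p ∈ Δ, g (p.1 ∪ p.2) - g p.1 ≤ n p) :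
    ∀ p ∈ Δ, h (p.1 ∪ p.2) - h p.1 ≤ n p := by
  intro p hp
  have key := hgΔ p hp
  simp only [hh]
  rcases le_total (g (p.1 ∪ p.2)) c with h1 | h1
  · have hle : g p.1 ≤ c := le_trans (hmono _ _ Finset.subset_union_left) h1
    rw [min_eq_left h1, min_eq_left hle]
    exact key
  · rw [min_eq_right h1]
    rcases le_total (g p.1) c with h2 | h2
    · rw [min_eq_left h2]
      exact le_trans (tsub_le_tsub h1 le_rfl) key
    · rw [min_eq_right h2]; simp
end

section
/- Let V be a finite set, 𝒯 a finite nonempty family of tree decompositions each given by a nonempty set of bags in 2^V, and (Δ, n) a collection of statistics over V. Define subw = max over polymatroids h : 2^V → ℝ≥0 satisfying (Δ, n) of min over T ∈ 𝒯 of max over bags B of T of h(B). Let g : 2^V → ℝ≥0 ∪ {∞} be monotone with g(∅) = 0 and g ⊨ (Δ, n); let c be its truncation constant, h(X) = min(g(X), c), and ℐ = {X ⊆ V : g(X) ≤ c}. If ℐ covers no member of 𝒯 and c < ∞, then c ≤ subw. -/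
open scoped ENNReal

/-- A polymatroid on `2^V`: vanishes on `∅`, monotone, and submodular. -/
def IsPolymatroid {V : Type*} [DecidableEq V] (h : Finset V → ℝ≥0∞) : Prop :=
  h ∅ = 0 ∧ (∀ X Y : Finset V, X ⊆ Y → h X ≤ h Y) ∧
    ∀ X Y : Finset V, h (X ∪ Y) + h (X ∩ Y) ≤ h X + h Y

/-- `h` satisfies the statistics `(Δ, n)`: a pair `(X, Y) ∈ Δ` stands for a conditional
term `Y|X`, and we require `h (X ∪ Y) - h X ≤ n (X, Y)`. -/
def SatisfiesStats {V : Type*} [DecidableEq V] (h : Finset V → ℝ≥0∞)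
    (Δ : Set (Finset V × Finset V)) (n : Finset V × Finset V → ℝ≥0∞) : Prop :=
  ∀ p ∈ Δ, h (p.1 ∪ p.2) - h p.1 ≤ n p

/-- **Truncation lemma, claim 2 (lower bound on the submodular width).**
Let `𝒯` be a finite nonempty family of tree decompositions, each given by its nonempty
set of bags, and let the submodular width be the supremum over polymatroids satisfying
`(Δ, n)` of the min over `T ∈ 𝒯` of the max over bags `B` of `T` of `h B`.
If `g` is monotone with `g ∅ = 0` and `g ⊨ (Δ, n)`, `c` is its truncation constant,
`I = {X | g X ≤ c}` covers no member of `𝒯`, and `c < ∞`, then `c ≤ subw`. -/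
theorem truncation_le_subw {V : Type*} [Fintype V] [DecidableEq V]
    (𝒯 : Finset (Finset (Finset V)))
    (h𝒯 : 𝒯.Nonempty)
    (hbags : ∀ T ∈ 𝒯, T.Nonempty)
    (Δ : Set (Finset V × Finset V))
    (n : Finset V × Finset V → ℝ≥0∞)
    (g : Finset V → ℝ≥0∞)
    (hmono : ∀ X Y : Finset V, X ⊆ Y → g X ≤ g Y)
    (hg0 : g ∅ = 0)
    (hgΔ : SatisfiesStats g Δ n)
    (f : Finset V → Finset V → ℝ≥0∞)
    (hf : ∀ X Y : Finset V, f X Y = g X + g Y - g (X ∩ Y))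
    (c : ℝ≥0∞)
    (hc : c = ⨅ p : {p : Finset V × Finset V // f p.1 p.2 < g (p.1 ∪ p.2)}, f p.1.1 p.1.2)
    (I : Set (Finset V))
    (hI : I = {X : Finset V | g X ≤ c})
    (hcov : ∀ T ∈ 𝒯, ¬ (↑T ⊆ I))
    (hcfin : c < ⊤) :
    c ≤ ⨆ h : {h : Finset V → ℝ≥0∞ // IsPolymatroid h ∧ SatisfiesStats h Δ n},
          ⨅ T ∈ 𝒯, ⨆ B ∈ T, (h : Finset V → ℝ≥0∞) B := by

  classical
  set h : Finset V → ℝ≥0∞ := fun X => min (g X) c with hh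
  -- key: h (X ∪ Y) ≤ f X Y
  have key : ∀ X Y : Finset V, h (X ∪ Y) ≤ f X Y := by
    intro X Y
    by_cases hlt : f X Y < g (X ∪ Y)
    · have : c ≤ f X Y := by
        rw [hc]
        exact iInf_le _ (⟨(X, Y), hlt⟩ : {p : Finset V × Finset V // f p.1 p.2 < g (p.1 ∪ p.2)})
      exact le_trans (min_le_right _ _) this
    · exact le_trans (min_le_left _ _) (not_lt.mp hlt)
  have hpoly : IsPolymatroid h := by
    refine ⟨?_, ?_, ?_⟩
    · simp [hh, hg0]
    · intro X Y hXY
      exact min_le_min (hmono _ _ hXY) le_rfl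
    · intro X Y
      rcases le_or_gt (g X) c with hX | hX
      · rcases le_or_gt (g Y) c with hY | hY
        · have h2 : g (X ∩ Y) ≤ g X + g Y :=
            le_trans (hmono _ _ Finset.inter_subset_left) le_self_add
          calc h (X ∪ Y) + h (X ∩ Y) ≤ f X Y + g (X ∩ Y) :=
                add_le_add (key X Y) (min_le_left _ _)
            _ = g X + g Y := by rw [hf]; exact tsub_add_cancel_of_le h2
            _ = h X + h Y := by rw [hh]; simp [min_eq_left hX, min_eq_left hY]
        · have h1 : h (X ∪ Y) ≤ h Y := by
            simp only [hh, min_eq_right hY.le]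
            exact min_le_right _ _
          have h2 : h (X ∩ Y) ≤ h X :=
            min_le_min (hmono _ _ Finset.inter_subset_left) le_rfl
          calc h (X ∪ Y) + h (X ∩ Y) ≤ h Y + h X := add_le_add h1 h2
            _ = h X + h Y := add_comm _ _
      · have h1 : h (X ∪ Y) ≤ h X := by
          simp only [hh, min_eq_right hX.le]
          exact min_le_right _ _
        have h2 : h (X ∩ Y) ≤ h Y :=
          min_le_min (hmono _ _ Finset.inter_subset_right) le_rfl
        exact add_le_add h1 h2
  have hstats : SatisfiesStats h Δ n := by
    intro p hp
    rcases le_or_gt (g p.1) c with hX | hX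
    · have h1 : h p.1 = g p.1 := min_eq_left hX
      have h2 : h (p.1 ∪ p.2) ≤ g (p.1 ∪ p.2) := min_le_left _ _
      calc h (p.1 ∪ p.2) - h p.1 ≤ g (p.1 ∪ p.2) - g p.1 := by
            rw [h1]; exact tsub_le_tsub_right h2 _
        _ ≤ n p := hgΔ p hp
    · have h1 : h p.1 = c := min_eq_right hX.le
      have h2 : h (p.1 ∪ p.2) ≤ c := min_le_right _ _
      have : h (p.1 ∪ p.2) - h p.1 = 0 := by rw [h1]; exact tsub_eq_zero_of_le h2
      simp [this]
  refine le_trans ?_ (le_iSup _ (⟨h, hpoly, hstats⟩ :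
    {h : Finset V → ℝ≥0∞ // IsPolymatroid h ∧ SatisfiesStats h Δ n}))
  simp only
  refine le_iInf fun T => le_iInf fun hT => ?_
  obtain ⟨B, hBT, hBI⟩ := Set.not_subset.mp (hcov T hT)
  have hgB : c < g B := by
    by_contra hle
    exact hBI (by rw [hI]; exact not_lt.mp hle)
  have : h B = c := min_eq_right hgB.le
  calc c = h B := this.symm
    _ ≤ ⨆ B ∈ T, h B := le_biSup _ hBT
end

section
/- Let V be a finite set and g, g' : 2^V → ℝ≥0 ∪ {∞} two monotone functions with g(∅) = g'(∅) = 0, g' ≤ g pointwise, and suppose there is a constant c ∈ ℝ≥0 such that for every Z ⊆ V with g'(Z) < g(Z) we have g'(Z) ≥ c. Define f(X,Y) = g(X)+g(Y)−g(X∩Y) and f'(X,Y) = g'(X)+g'(Y)−g'(X∩Y). Assume additionally that for every pair X, Y with g(X∪Y) > f(X,Y), we have f(X,Y) ≥ c. Then for every pair X, Y ⊆ V with g'(X∪Y) > f'(X,Y), we have f'(X,Y) ≥ c. Consequently the truncation constant c' of g' satisfies c' ≥ c. -/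
open scoped ENNReal NNReal

/-- **Key monotonicity claim (`cℓ ≥ c`).**
Let `g, g'` be monotone with `g ∅ = g' ∅ = 0`, `g' ≤ g` pointwise, and suppose `c : ℝ≥0` is
such that every `Z` with `g' Z < g Z` has `g' Z ≥ c`. Define `f X Y = g X + g Y - g (X ∩ Y)`
and similarly `f'` from `g'`. If every submodularity violation of `g` has `f X Y ≥ c`, then
every submodularity violation of `g'` has `f' X Y ≥ c`; consequently the truncation constant
`c'` of `g'` satisfies `c' ≥ c`. -/
theorem violations_ge_c {V : Type*} [Fintype V] [DecidableEq V]
    (g g' : Finset V → ℝ≥0∞)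
    (hmono : ∀ X Y : Finset V, X ⊆ Y → g X ≤ g Y)
    (hmono' : ∀ X Y : Finset V, X ⊆ Y → g' X ≤ g' Y)
    (hg0 : g ∅ = 0) (hg0' : g' ∅ = 0)
    (hle : ∀ Z : Finset V, g' Z ≤ g Z)
    (c : ℝ≥0)
    (hlow : ∀ Z : Finset V, g' Z < g Z → (c : ℝ≥0∞) ≤ g' Z)
    (f f' : Finset V → Finset V → ℝ≥0∞)
    (hf : ∀ X Y : Finset V, f X Y = g X + g Y - g (X ∩ Y))
    (hf' : ∀ X Y : Finset V, f' X Y = g' X + g' Y - g' (X ∩ Y))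
    (hvio : ∀ X Y : Finset V, f X Y < g (X ∪ Y) → (c : ℝ≥0∞) ≤ f X Y)
    (c' : ℝ≥0∞)
    (hc' : c' = ⨅ p : {p : Finset V × Finset V // f' p.1 p.2 < g' (p.1 ∪ p.2)}, f' p.1.1 p.1.2) :
    (∀ X Y : Finset V, f' X Y < g' (X ∪ Y) → (c : ℝ≥0∞) ≤ f' X Y) ∧ (c : ℝ≥0∞) ≤ c' := by
  have key : ∀ X Y : Finset V, f' X Y < g' (X ∪ Y) → (c : ℝ≥0∞) ≤ f' X Y := by
    intro X Y hXY
    by_cases htop : g' (X ∩ Y) = ∞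
    · -- then g is ∞ on X, Y, X ∪ Y and f X Y = 0, giving c ≤ 0
      have hgi : g (X ∩ Y) = ∞ := top_le_iff.mp (htop ▸ hle (X ∩ Y))
      have hgX : g X = ∞ := top_le_iff.mp (hgi ▸ hmono _ _ Finset.inter_subset_left)
      have hgU : g (X ∪ Y) = ∞ := top_le_iff.mp (hgX ▸ hmono _ _ Finset.subset_union_left)
      have hfz : f X Y = 0 := by
        rw [hf, hgX, hgi]; simp
      have : (c : ℝ≥0∞) ≤ 0 := by
        have := hvio X Y (by rw [hfz, hgU]; exact ENNReal.zero_lt_top)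
        rwa [hfz] at this
      exact le_trans this zero_le
    have hgeX : g' X ≤ f' X Y := by
      rw [hf' X Y]
      exact ENNReal.le_sub_of_add_le_right htop (add_le_add_right
        (hmono' _ _ (Finset.inter_subset_right)) _)
    have hgeY : g' Y ≤ f' X Y := by
      rw [hf' X Y, add_comm (g' X)]
      exact ENNReal.le_sub_of_add_le_right htop (add_le_add_right
        (hmono' _ _ (Finset.inter_subset_left)) _)
    by_cases hX : g' X < g X
    · exact le_trans (hlow X hX) hgeX
    by_cases hY : g' Y < g Y
    · exact le_trans (hlow Y hY) hgeY
    have hX' : g' X = g X := le_antisymm (hle X) (not_lt.mp hX)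
    have hY' : g' Y = g Y := le_antisymm (hle Y) (not_lt.mp hY)
    have hff : f X Y ≤ f' X Y := by
      rw [hf, hf', hX', hY']
      exact tsub_le_tsub le_rfl (hle _)
    have hvioXY : f X Y < g (X ∪ Y) :=
      lt_of_le_of_lt hff (lt_of_lt_of_le hXY (hle _))
    exact le_trans (hvio X Y hvioXY) hff
  refine ⟨key, ?_⟩
  rw [hc']
  exact le_iInf fun p => key p.1.1 p.1.2 p.2
end
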